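/- arXiv:2508.17312 — 2 statements merged into one kernel-verified Lean document; each statement's English description precedes it below -/
import Mathlib

section
/- Let L be an L-algebra and a ∈ L, a ≠ 1, and let l_a be the operator l_a(x) = a if x ≤ a and 1 otherwise. Then l_a is maximal among closure L-operators: if l' is a closure L-operator with l_a ≤ l' pointwise, then l' = l_a or l' = ω_L (the constant-1 operator). -/
/-- An L-algebra: a set with binary operation `arr` (→) and logical unit `one`. -/
class LAlg (L : Type) where
  arr : L → L → L
  one : L
  arr_self : ∀ x : L, arr x x = one
  arr_one : ∀ x : L, arr x one = one
  one_arr : ∀ x : L, arr one x = x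
  exch : ∀ x y z : L, arr (arr x y) (arr x z) = arr (arr y x) (arr y z)
  antisymm : ∀ x y : L, arr x y = one → arr y x = one → x = y

namespace LAlg

variable {L : Type} [LAlg L]

/-- The order on an L-algebra: `x ≤ y` iff `x → y = 1`. -/
def le (x y : L) : Prop := arr x y = one

/-- An L-operator: extensive, monotone, idempotent. -/
def IsOp (l : L → L) : Prop :=
  (∀ x : L, le x (l x)) ∧ (∀ x y : L, le x y → le (l x) (l y)) ∧ (∀ x : L, l (l x) = l x)

/-- A closure L-operator. -/
def IsClosureOp (l : L → L) : Prop :=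
  IsOp l ∧ ∀ x y : L, le (l (arr x y)) (arr (l x) (l y))

end LAlg

/-
Every value `l' y` of an idempotent operator above `l_a` is `a` or `1`: if `l' y ≤ a` then
`a ≤ l' (l' y) = l' y`, and otherwise `1 ≤ l' (l' y) = l' y`. If `l' a = a`, monotonicity pins
`l'` to `a` on the down-set of `a`, so `l' = l_a`. If `l' a ≠ a`, no `x` can have `l' x = a`,
since then `l' a = l' (l' x) = a`; hence `l'` is constantly `1`.
-/

namespace LAlg

variable {L : Type} [LAlg L]

theorem eq_one_of_one_le {y : L} (h : le one y) : y = one :=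
  (one_arr y).symm.trans h

open Classical in
/-- The operator `l_a`. -/
noncomputable def principalOp (a : L) (x : L) : L := if le x a then a else one

section principalOp

variable {a x : L}

theorem principalOp_of_le (h : le x a) : principalOp a x = a := if_pos h

theorem principalOp_of_not_le (h : ¬ le x a) : principalOp a x = one := if_neg h

variable {l : L → L}

theorem le_apply_of_le_of_principalOp_le
    (hle : ∀ x, le (principalOp a x) (l x))
    (hx : le x a) : le a (l x) := by
  simpa only [principalOp_of_le hx] using hle x

theorem apply_eq_one_of_not_le_of_principalOp_le
    (hle : ∀ x, le (principalOp a x) (l x))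
    (hx : ¬ le x a) : l x = one :=
  eq_one_of_one_le (by simpa only [principalOp_of_not_le hx] using hle x)

theorem apply_eq_or_eq_one_of_principalOp_le
    (hle : ∀ x, le (principalOp a x) (l x))
    (hidem : ∀ x, l (l x) = l x) (x : L) :
    l x = a ∨ l x = one := by
  by_cases hxa : le (l x) a
  · exact Or.inl (antisymm _ _ hxa (hidem x ▸ le_apply_of_le_of_principalOp_le hle hxa))
  · exact Or.inr (hidem x ▸ apply_eq_one_of_not_le_of_principalOp_le hle hxa)

theorem eq_principalOp_of_principalOp_le
    (hle : ∀ x, le (principalOp a x) (l x))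
    (hmono : ∀ x y, le x y → le (l x) (l y))
    (ha : l a = a) (x : L) : l x = principalOp a x := by
  by_cases hx : le x a
  · rw [principalOp_of_le hx]
    exact antisymm _ _ (ha ▸ hmono x a hx) (le_apply_of_le_of_principalOp_le hle hx)
  · rw [principalOp_of_not_le hx]
    exact apply_eq_one_of_not_le_of_principalOp_le hle hx

theorem eq_one_of_principalOp_le
    (hle : ∀ x, le (principalOp a x) (l x))
    (hidem : ∀ x, l (l x) = l x) (ha : l a ≠ a) (x : L) :
    l x = one := by
  refine (apply_eq_or_eq_one_of_principalOp_le hle hidem x).resolve_left fun hx => ha ?_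
  rw [← hx, hidem]

end principalOp

end LAlg

open LAlg Classical in
theorem la_maximal_general {L : Type} [LAlg L] (a : L)
    (l' : L → L) (hl' : IsClosureOp l')
    (hle : ∀ x : L, le ((fun x : L => if le x a then a else one) x) (l' x)) :
    (∀ x : L, l' x = (fun x : L => if le x a then a else one) x) ∨
    (∀ x : L, l' x = one) := by
  obtain ⟨⟨-, hmono, hidem⟩, -⟩ := hl'
  by_cases ha : l' a = a
  · exact Or.inl (eq_principalOp_of_principalOp_le hle hmono ha)
  · exact Or.inr (eq_one_of_principalOp_le hle hidem ha)

open LAlg Classical in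
/-- l_a is maximal among closure L-operators. -/
theorem la_maximal {L : Type} [LAlg L] (a : L) (ha : a ≠ one)
    (l' : L → L) (hl' : IsClosureOp l')
    (hle : ∀ x : L, le ((fun x : L => if le x a then a else one) x) (l' x)) :
    (∀ x : L, l' x = (fun x : L => if le x a then a else one) x) ∨
    (∀ x : L, l' x = one) :=
  la_maximal_general a l' hl' hle
end

section
/- Let ξ and η be finite partitions of a bounded L-algebra L with state m having the Bayes property. Then H(ξ ∨ η) = H(ξ | η) + H(η), where H(ξ) = -Σᵢ m(xᵢ) log m(xᵢ) and H(ξ|η) = -Σᵢⱼ m(xᵢ⊙yⱼ) log(m(xᵢ⊙yⱼ)/m(yⱼ)) (omitting terms with m(yⱼ)=0). -/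
/-- A bounded L-algebra: an L-algebra with a least element `zero`. -/
class BLAlg (L : Type) where
  arr : L → L → L
  one : L
  zero : L
  arr_self : ∀ x : L, arr x x = one
  arr_one : ∀ x : L, arr x one = one
  one_arr : ∀ x : L, arr one x = x
  exch : ∀ x y z : L, arr (arr x y) (arr x z) = arr (arr y x) (arr y z)
  antisymm : ∀ x y : L, arr x y = one → arr y x = one → x = y
  zero_arr : ∀ x : L, arr zero x = one

namespace BLAlg

variable {L : Type} [BLAlg L]

/-- The order: `x ≤ y` iff `x → y = 1`. -/
def le (x y : L) : Prop := arr x y = one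

/-- `y' = y → 0`. -/
def neg (y : L) : L := arr y zero

/-- Orthogonality: `x ⊥ y` iff `x ≤ y'`. -/
def orth (x y : L) : Prop := le x (neg y)

/-- Orthogonal sum `x ⊕ y = y' → x`. -/
def oplus (x y : L) : L := arr (neg y) x

/-- Left-associated orthogonal sum of a finite family. -/
def osum : List L → L
  | [] => zero
  | x :: xs => xs.foldl oplus x

/-- A finite family is orthogonal if each partial sum is orthogonal to the next element. -/
def IsOrthList (l : List L) : Prop :=
  ∀ (k : ℕ) (h : k + 1 < l.length), orth (osum (l.take (k + 1))) (l[k + 1]'h)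

/-- A state on a bounded L-algebra. -/
structure IsState (m : L → ℝ) : Prop where
  nonneg : ∀ x : L, 0 ≤ m x
  le_one : ∀ x : L, m x ≤ 1
  map_one : m one = 1
  add : ∀ x y : L, orth x y → m (oplus x y) = m x + m y
  mono : ∀ x y : L, le x y → m x ≤ m y

/-- A finite partition of unity: a nonempty orthogonal family whose ⊕-sum has state 1. -/
def IsPartition (m : L → ℝ) (l : List L) : Prop :=
  l ≠ [] ∧ IsOrthList l ∧ m (osum l) = 1

/-- `od` is the operation `x ⊙ y = x − y'` when `y' ≤ x`, and `0` otherwise,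
where `x − y' = z` iff `x = z ⊕ y'`. -/
def IsOdot (od : L → L → L) : Prop :=
  ∀ x y : L, (le (neg y) x → x = oplus (od x y) (neg y)) ∧ (¬ le (neg y) x → od x y = zero)

/-- The Bayes property of a state: `Σᵢ m(xᵢ ⊙ y) = m(y)` for every partition and every `y`. -/
def Bayes (m : L → ℝ) (od : L → L → L) : Prop :=
  ∀ l : List L, IsPartition m l → ∀ y : L, (l.map fun x => m (od x y)).sum = m y

/-- Entropy of a finite partition: `H(ξ) = -Σ m(xᵢ) log m(xᵢ)`. -/
noncomputable def H (m : L → ℝ) (l : List L) : ℝ :=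
  -(l.map fun x => m x * Real.log (m x)).sum

open Classical in
/-- Conditional entropy `H(ξ | η) = -Σᵢⱼ m(xᵢ⊙yⱼ) log (m(xᵢ⊙yⱼ)/m(yⱼ))`,
omitting the terms with `m(yⱼ) = 0`. -/
noncomputable def Hc (m : L → ℝ) (od : L → L → L) (ξ η : List L) : ℝ :=
  -(ξ.map fun x =>
      (η.map fun y =>
        if m y = 0 then 0 else m (od x y) * Real.log (m (od x y) / m y)).sum).sum

/-- Common refinement `ξ ∨ η = {xᵢ ⊙ yⱼ}`. -/
def vee (od : L → L → L) (ξ η : List L) : List L :=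
  ξ.flatMap fun x => η.map fun y => od x y

/-- An L-dynamical system `(L, T, m)`: `T` is a →-homomorphism fixing 1 and 0 and
preserving the state `m`. -/
def IsDyn (m : L → ℝ) (T : L → L) : Prop :=
  (∀ a b : L, T (arr a b) = arr (T a) (T b)) ∧ T one = one ∧ T zero = zero ∧
    ∀ a : L, m (T a) = m a

/-- The iterated refinement `ref od T ξ n = ⋁_{i=0}^{n} Tⁱ(ξ)`. -/
def ref (od : L → L → L) (T : L → L) (ξ : List L) : ℕ → List L
  | 0 => ξ
  | n + 1 => vee od (ref od T ξ n) (ξ.map T^[n + 1])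

end BLAlg

/-
For a fixed `y`, the Bayes property says that the numbers `m (xᵢ ⊙ y)` sum to `m y`. When
`m y ≠ 0`, expanding `log (m (xᵢ ⊙ y) / m y)` gives
`Σᵢ m (xᵢ ⊙ y) log m (xᵢ ⊙ y) = Σᵢ m (xᵢ ⊙ y) log (m (xᵢ ⊙ y) / m y) + m y log m y`;
when `m y = 0`, all the `m (xᵢ ⊙ y)` vanish, being nonnegative, and both sides are `0`.
Summing over `y` and exchanging the order of summation gives the chain rule.
-/

section ListSum

variable {α : Type*}

theorem List.sum_map_flatMap {β M : Type*} [AddCommMonoid M] (l : List α) (f : α → List β)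
    (g : β → M) : ((l.flatMap f).map g).sum = (l.map fun a => ((f a).map g).sum).sum := by
  simp [List.flatMap_def, List.sum_flatten, List.map_flatten, Function.comp_def]

theorem List.sum_map_sum_map {β M : Type*} [AddCommMonoid M] (l₁ : List α) (l₂ : List β)
    (f : α → β → M) :
    (l₁.map fun a => (l₂.map fun b => f a b).sum).sum
      = (l₂.map fun b => (l₁.map fun a => f a b).sum).sum := by
  simpa using Multiset.sum_map_sum_map (l₁ : Multiset α) (l₂ : Multiset β) (f := f)

theorem List.sum_map_mul_log_div_of_sum_eq (l : List α) (p : α → ℝ) {s : ℝ} (hs : s ≠ 0)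
    (hsum : (l.map p).sum = s) :
    (l.map fun a => p a * Real.log (p a / s)).sum
      = (l.map fun a => p a * Real.log (p a)).sum - s * Real.log s := by
  have hterm : ∀ a, p a * Real.log (p a / s) = p a * Real.log (p a) - p a * Real.log s := by
    intro a
    by_cases hpa : p a = 0
    · simp [hpa]
    · rw [Real.log_div hpa hs, mul_sub]
  simp only [hterm]
  rw [← hsum, ← List.sum_map_mul_right]
  simpa using Multiset.sum_map_sub (m := (l : Multiset α))
    (f := fun a => p a * Real.log (p a)) (g := fun a => p a * Real.log (l.map p).sum)

theorem List.sum_map_mul_log_eq_zero_of_sum_eq_zero (l : List α) (p : α → ℝ)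
    (hp : ∀ a ∈ l, 0 ≤ p a) (hsum : (l.map p).sum = 0) :
    (l.map fun a => p a * Real.log (p a)).sum = 0 := by
  have hzero : ∀ a ∈ l, p a = 0 := fun a ha =>
    List.all_zero_of_le_zero_le_of_sum_eq_zero (by simpa using hp) hsum (List.mem_map_of_mem ha)
  exact List.sum_eq_zero fun r hr => by
    obtain ⟨a, ha, rfl⟩ := List.mem_map.mp hr
    simp [hzero a ha]

end ListSum

namespace BLAlg

variable {L : Type} [BLAlg L] {m : L → ℝ} {od : L → L → L} {ξ : List L}

theorem sum_mul_log_odot_eq (hm : IsState m) (hB : Bayes m od) (hξ : IsPartition m ξ) (y : L) :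
    (ξ.map fun x => m (od x y) * Real.log (m (od x y))).sum
      = (ξ.map fun x =>
          if m y = 0 then 0 else m (od x y) * Real.log (m (od x y) / m y)).sum
        + m y * Real.log (m y) := by
  have hsum : (ξ.map fun x => m (od x y)).sum = m y := hB ξ hξ y
  by_cases hy : m y = 0
  · rw [hy] at hsum
    simp [hy, List.sum_map_mul_log_eq_zero_of_sum_eq_zero ξ _ (fun x _ => hm.nonneg _) hsum]
  · simp [hy, List.sum_map_mul_log_div_of_sum_eq ξ _ hy hsum]

end BLAlg

open BLAlg in
theorem entropy_refinement_general {L : Type} [BLAlg L] (m : L → ℝ) (hm : IsState m)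
    (od : L → L → L) (hB : Bayes m od)
    (ξ η : List L) (hξ : IsPartition m ξ) :
    H m (vee od ξ η) = Hc m od ξ η + H m η := by
  have hcolumns := sum_mul_log_odot_eq hm hB hξ
  simp only [H, Hc, vee, List.sum_map_flatMap, List.map_map, Function.comp_def]
  rw [List.sum_map_sum_map ξ η, List.sum_map_sum_map ξ η, ← neg_add, ← List.sum_map_add]
  simp only [hcolumns]

open BLAlg in
/-- H(ξ ∨ η) = H(ξ | η) + H(η). -/
theorem entropy_refinement {L : Type} [BLAlg L] (m : L → ℝ) (hm : IsState m)
    (od : L → L → L) (hod : IsOdot od) (hB : Bayes m od)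
    (ξ η : List L) (hξ : IsPartition m ξ) (hη : IsPartition m η) :
    H m (vee od ξ η) = Hc m od ξ η + H m η :=
  entropy_refinement_general m hm od hB ξ η hξ
end
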